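/- Let a ∈ ℂ, a ≠ 0. For every M > 0 there exist a constant C > 0 and an integer N such that for all n ≥ N and all z ∈ ℂ with |z| ≤ M/n², one has |α_n(z) − a²/(2n²)| ≤ C/n⁴. -/

import Mathlib

open Complex

/-- Extended walk: `extWalk b e k j i` equals `b` for `i = 0`, `j (i-1)` for `1 ≤ i ≤ k`,
and `e` for `i > k`. -/
def extWalk (b e : ℤ) (k : ℕ) (j : Fin k → ℤ) : ℕ → ℤ := fun i =>
  if h : 1 ≤ i ∧ i ≤ k then j ⟨i - 1, by omega⟩ else if i = 0 then b else e

/-- Generic term of the sums `S_k^{ij}(n,z)`: for a `k`-tuple `j` of integers avoiding `±n`,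
the value `V(j₁ - b) V(j₂ - j₁) ⋯ V(j_k - j_{k-1}) V(e - j_k) / ∏_s (n² - j_s² + z)`. -/
noncomputable def Sterm (V : ℤ → ℂ) (n : ℕ) (z : ℂ) (b e : ℤ) (k : ℕ)
    (j : Fin k → {m : ℤ // m ≠ (n : ℤ) ∧ m ≠ -(n : ℤ)}) : ℂ :=
  (∏ i ∈ Finset.range (k + 1),
      V (extWalk b e k (fun s => (j s : ℤ)) (i + 1) - extWalk b e k (fun s => (j s : ℤ)) i)) /
    ∏ s : Fin k, ((n : ℂ) ^ 2 - ((j s : ℤ) : ℂ) ^ 2 + z)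

/-- The Mathieu Fourier coefficients: `V(2) = V(-2) = a` and `V(m) = 0` for `m ≠ ±2`. -/
noncomputable def mathieuV (a : ℂ) : ℤ → ℂ := fun m => if m = 2 ∨ m = -2 then a else 0

/-- `A_p(n,z)` for the Mathieu potential: the sum over `p`-tuples `(j₁,…,j_p)` of integers
avoiding `±n` of `V(-n+j₁) V(j₂-j₁) ⋯ V(j_p-j_{p-1}) V(n-j_p) / ∏_s (n²-j_s²+z)`. -/
noncomputable def Acoef (a : ℂ) (n : ℕ) (z : ℂ) (p : ℕ) : ℂ :=
  ∑' j : Fin p → {m : ℤ // m ≠ (n : ℤ) ∧ m ≠ -(n : ℤ)},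
    Sterm (mathieuV a) n z (n : ℤ) (n : ℤ) p j

/-- `α_n(z) = ∑_{p=1}^∞ A_p(n,z)`. -/
noncomputable def alphaC (a : ℂ) (n : ℕ) (z : ℂ) : ℂ := ∑' p : ℕ, Acoef a n z (p + 1)

/-!
Expand `A_p(n,z)` as a sum over closed walks `n → j₁ → ⋯ → j_p → n` whose steps are `±2`, the
only frequencies of `V`. Such a walk is determined by the signs of its steps, so at most `2^p`
terms are non-zero, each bounded by `|a|^(p+1) / (2n-2)^p`; hence `|A_p| ≤ |a| (|a|/(n-1))^p`,
and the tail `∑_{p ≥ 5} A_p` is `O(n⁻⁵)`. Steps are `≡ 2 (mod 4)` and sum to `0`, so `p` is odd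
and `A_2 = A_4 = 0`. The remaining terms come from the loops `n → n ± 2 → n` and
`n → n ± 2 → n ± 4 → n ± 2 → n`, which give `A_1 = a²/(2n²) + O(n⁻⁴)` and `A_3 = O(n⁻⁴)`.
-/

abbrev Avoid (n : ℕ) : Type := {m : ℤ // m ≠ (n : ℤ) ∧ m ≠ -(n : ℤ)}

section extWalk

variable (b e : ℤ) {k : ℕ} (j : Fin k → ℤ)

@[simp] lemma extWalk_zero : extWalk b e k j 0 = b := by
  simp [extWalk]

@[simp] lemma extWalk_succ (s : Fin k) : extWalk b e k j (s + 1) = j s := by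
  simp [extWalk, Nat.succ_le_of_lt s.2]

@[simp] lemma extWalk_length_succ : extWalk b e k j (k + 1) = e := by
  simp [extWalk]

end extWalk

lemma two_mul_sub_one_le_abs_sq_sub_sq {k m : ℤ} (hk : 0 ≤ k) (h₁ : m ≠ k) (h₂ : m ≠ -k) :
    2 * k - 1 ≤ |k ^ 2 - m ^ 2| := by
  have hsub : 1 ≤ |k - m| := Int.one_le_abs (sub_ne_zero.2 h₁.symm)
  have hadd : 1 ≤ |k + m| := Int.one_le_abs (by omega)
  have hsum : 2 * k ≤ |k - m| + |k + m| := by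
    calc 2 * k = |(k - m) + (k + m)| := by rw [abs_of_nonneg (by omega)]; ring
      _ ≤ |k - m| + |k + m| := abs_add_le _ _
  rw [show k ^ 2 - m ^ 2 = (k - m) * (k + m) by ring, abs_mul]
  nlinarith

lemma two_mul_sub_two_le_norm_sq_sub_sq_add {n : ℕ} (m : Avoid n) {z : ℂ} (hz : ‖z‖ ≤ 1) :
    2 * (n : ℝ) - 2 ≤ ‖(n : ℂ) ^ 2 - ((m : ℤ) : ℂ) ^ 2 + z‖ := by
  have hint : (2 * (n : ℝ) - 1) ≤ ‖(n : ℂ) ^ 2 - ((m : ℤ) : ℂ) ^ 2‖ := by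
    rw [show (n : ℂ) ^ 2 - ((m : ℤ) : ℂ) ^ 2 = (((n : ℤ) ^ 2 - (m : ℤ) ^ 2 : ℤ) : ℂ) by
      push_cast; ring, Complex.norm_intCast]
    exact_mod_cast two_mul_sub_one_le_abs_sq_sub_sq (Int.natCast_nonneg n) m.2.1 m.2.2
  have := norm_sub_norm_le ((n : ℂ) ^ 2 - ((m : ℤ) : ℂ) ^ 2) (-z)
  rw [norm_neg, sub_neg_eq_add] at this
  linarith

section Sterm

variable {V : ℤ → ℂ} {n : ℕ} {z : ℂ} {b e : ℤ} {p : ℕ} {j : Fin p → Avoid n}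

lemma norm_Sterm_le {B d : ℝ} (hV : ∀ m, ‖V m‖ ≤ B) (hd : 0 < d)
    (hden : ∀ m : Avoid n, d ≤ ‖(n : ℂ) ^ 2 - ((m : ℤ) : ℂ) ^ 2 + z‖) (j : Fin p → Avoid n) :
    ‖Sterm V n z b e p j‖ ≤ B ^ (p + 1) / d ^ p := by
  have hB : 0 ≤ B := (norm_nonneg _).trans (hV 0)
  rw [Sterm, norm_div, norm_prod, norm_prod]
  gcongr
  · simpa using Finset.prod_le_prod (s := Finset.range (p + 1)) (fun _ _ => norm_nonneg _)
      (fun i _ => hV _)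
  · simpa using Finset.prod_le_prod (s := Finset.univ) (fun _ _ => hd.le) (fun s _ => hden (j s))

lemma step_ne_zero_of_Sterm_ne_zero (h : Sterm V n z b e p j ≠ 0) {i : ℕ} (hi : i ≤ p) :
    V (extWalk b e p (fun s => (j s : ℤ)) (i + 1) - extWalk b e p (fun s => (j s : ℤ)) i) ≠ 0 :=
  fun h0 => h <| by
    rw [Sterm, Finset.prod_eq_zero (Finset.mem_range.2 (Nat.lt_succ_of_le hi)) h0, zero_div]

end Sterm

section Mathieu

variable {a : ℂ} {n : ℕ} {z : ℂ} {b e : ℤ} {p : ℕ}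

lemma eq_two_or_eq_neg_two_of_mathieuV_ne_zero {m : ℤ} (h : mathieuV a m ≠ 0) :
    m = 2 ∨ m = -2 := by
  by_contra hm
  exact h (if_neg hm)

lemma norm_mathieuV_le (a : ℂ) (m : ℤ) : ‖mathieuV a m‖ ≤ ‖a‖ := by
  unfold mathieuV
  split_ifs <;> simp

lemma step_eq_two_or_eq_neg_two {j : Fin p → Avoid n} (h : Sterm (mathieuV a) n z b e p j ≠ 0)
    {i : ℕ} (hi : i ≤ p) :
    extWalk b e p (fun s => (j s : ℤ)) (i + 1) - extWalk b e p (fun s => (j s : ℤ)) i = 2 ∨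
      extWalk b e p (fun s => (j s : ℤ)) (i + 1) - extWalk b e p (fun s => (j s : ℤ)) i = -2 :=
  eq_two_or_eq_neg_two_of_mathieuV_ne_zero (step_ne_zero_of_Sterm_ne_zero h hi)

/-- Every step is `≡ 2 (mod 4)` and the `p + 1` steps of a loop sum to `0`. -/
lemma Sterm_mathieuV_eq_zero_of_even (hp : Even p) (j : Fin p → Avoid n) :
    Sterm (mathieuV a) n z b b p j = 0 := by
  by_contra h
  set w := extWalk b b p (fun s => (j s : ℤ))
  have hloop : ∑ i ∈ Finset.range (p + 1), (w (i + 1) - w i) = 0 := by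
    rw [Finset.sum_range_sub]
    simp [w]
  have hdvd : (4 : ℤ) ∣ ∑ i ∈ Finset.range (p + 1), ((w (i + 1) - w i) - 2) :=
    Finset.dvd_sum fun i hi => by
      rcases step_eq_two_or_eq_neg_two h (Nat.lt_succ_iff.1 (Finset.mem_range.1 hi))
        with h2 | h2 <;> simp [w, h2]
  rw [Finset.sum_sub_distrib, hloop, Finset.sum_const, Finset.card_range, zero_sub, dvd_neg,
    nsmul_eq_mul] at hdvd
  obtain ⟨k, rfl⟩ := hp
  push_cast at hdvd
  omega

lemma eq_of_step_pos_iff {j j' : Fin p → Avoid n}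
    (h : Sterm (mathieuV a) n z b e p j ≠ 0) (h' : Sterm (mathieuV a) n z b e p j' ≠ 0)
    (hsign : ∀ i : Fin p,
      0 < extWalk b e p (fun s => (j s : ℤ)) (i + 1) - extWalk b e p (fun s => (j s : ℤ)) i ↔
        0 < extWalk b e p (fun s => (j' s : ℤ)) (i + 1) - extWalk b e p (fun s => (j' s : ℤ)) i) :
    j = j' := by
  set w := extWalk b e p (fun s => (j s : ℤ))
  set w' := extWalk b e p (fun s => (j' s : ℤ))
  have key : ∀ i ≤ p, w i = w' i := by
    intro i
    induction i with
    | zero => simp [w, w']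
    | succ i ih =>
      intro hi
      have := hsign ⟨i, hi⟩
      rcases step_eq_two_or_eq_neg_two h (Nat.le_of_succ_le hi) with hs | hs <;>
      rcases step_eq_two_or_eq_neg_two h' (Nat.le_of_succ_le hi) with hs' | hs' <;>
      · simp only [w, w'] at ih hs hs' this ⊢
        omega
  funext s
  exact Subtype.ext (by simpa [w, w'] using key (s + 1) s.2)

lemma exists_finset_card_le_Sterm_mathieuV_eq_zero :
    ∃ S : Finset (Fin p → Avoid n), S.card ≤ 2 ^ p ∧
      ∀ j ∉ S, Sterm (mathieuV a) n z b e p j = 0 := by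
  classical
  let signs (j : Fin p → Avoid n) (i : Fin p) : Bool :=
    decide (0 < extWalk b e p (fun s => (j s : ℤ)) (i + 1) - extWalk b e p (fun s => (j s : ℤ)) i)
  have hinj : Set.InjOn signs (Function.support fun j => Sterm (mathieuV a) n z b e p j) :=
    fun j hj j' hj' heq => eq_of_step_pos_iff hj hj' fun i => by
      simpa [signs] using congrFun heq i
  have hfin := Set.Finite.of_finite_image (Set.toFinite _) hinj
  refine ⟨hfin.toFinset, ?_, fun j hj => by simpa using hj⟩
  simpa using Finset.card_le_card_of_injOn signs (fun _ _ => Finset.mem_univ _)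
    (by simpa using hinj)

end Mathieu

section Acoef

variable {a : ℂ} {n : ℕ} {z : ℂ}

lemma Acoef_eq_zero_of_even {p : ℕ} (hp : Even p) : Acoef a n z p = 0 := by
  simp [Acoef, Sterm_mathieuV_eq_zero_of_even hp]

lemma norm_Acoef_le (hn : 2 ≤ n) (hz : ‖z‖ ≤ 1) (p : ℕ) :
    ‖Acoef a n z p‖ ≤ ‖a‖ * (‖a‖ / ((n : ℝ) - 1)) ^ p := by
  obtain ⟨S, hcard, hS⟩ := exists_finset_card_le_Sterm_mathieuV_eq_zero
    (a := a) (n := n) (z := z) (b := n) (e := n) (p := p)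
  have hn' : (2 : ℝ) ≤ n := by exact_mod_cast hn
  have hterm : ∀ j, ‖Sterm (mathieuV a) n z n n p j‖ ≤ ‖a‖ ^ (p + 1) / (2 * (n : ℝ) - 2) ^ p :=
    norm_Sterm_le (norm_mathieuV_le a) (by linarith) fun m =>
      two_mul_sub_two_le_norm_sq_sub_sq_add m hz
  have hbound : 0 ≤ ‖a‖ ^ (p + 1) / (2 * (n : ℝ) - 2) ^ p :=
    div_nonneg (by positivity) (pow_nonneg (by linarith) _)
  rw [Acoef, tsum_eq_sum (s := S) fun j hj => hS j hj]
  calc _ ≤ ∑ _j ∈ S, ‖a‖ ^ (p + 1) / (2 * (n : ℝ) - 2) ^ p := norm_sum_le_of_le _ fun j _ => hterm j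
    _ ≤ 2 ^ p * (‖a‖ ^ (p + 1) / (2 * (n : ℝ) - 2) ^ p) := by
      rw [Finset.sum_const, nsmul_eq_mul]
      gcongr
      exact_mod_cast hcard
    _ = _ := by
      rw [show 2 * (n : ℝ) - 2 = 2 * ((n : ℝ) - 1) by ring, mul_pow, div_pow]
      field_simp
      ring

lemma norm_div_sub_one_mem_Icc {x : ℝ} (hx : 2 * ‖a‖ + 2 ≤ x) :
    ‖a‖ / (x - 1) ∈ Set.Icc 0 (1 / 2) := by
  have hx1 : 0 < x - 1 := by linarith [norm_nonneg a]
  exact ⟨div_nonneg (norm_nonneg a) hx1.le, by rw [div_le_iff₀ hx1]; linarith⟩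

lemma alphaC_eq_Acoef_one_add_Acoef_three_add (hn : 2 * ‖a‖ + 2 ≤ n) (hz : ‖z‖ ≤ 1) :
    alphaC a n z = Acoef a n z 1 + Acoef a n z 3 + ∑' i, Acoef a n z (i + 5) := by
  have hn2 : 2 ≤ n := by exact_mod_cast (by linarith [norm_nonneg a] : (2 : ℝ) ≤ n)
  obtain ⟨hq0, hq⟩ := norm_div_sub_one_mem_Icc hn
  have hsum : Summable fun p => Acoef a n z (p + 1) :=
    .of_norm_bounded
      ((summable_geometric_of_lt_one hq0 (hq.trans_lt (by norm_num))).mul_left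
        (‖a‖ * (‖a‖ / ((n : ℝ) - 1))))
      fun p => (norm_Acoef_le hn2 hz (p + 1)).trans_eq (by ring)
  rw [alphaC, ← hsum.sum_add_tsum_nat_add 4]
  simp [Finset.sum_range_succ, Acoef_eq_zero_of_even (show Even 2 by decide),
    Acoef_eq_zero_of_even (show Even 4 by decide)]

lemma norm_tsum_Acoef_add_five_le (hn : 2 * ‖a‖ + 2 ≤ n) (hz : ‖z‖ ≤ 1) :
    ‖∑' i, Acoef a n z (i + 5)‖ ≤ 16 * ‖a‖ ^ 5 / (n : ℝ) ^ 4 := by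
  have hn2 : 2 ≤ n := by exact_mod_cast (by linarith [norm_nonneg a] : (2 : ℝ) ≤ n)
  obtain ⟨hq0, hq⟩ := norm_div_sub_one_mem_Icc hn
  set q := ‖a‖ / ((n : ℝ) - 1)
  have hqn : q ≤ 2 * ‖a‖ / n := by
    rw [div_le_div_iff₀ (by linarith [norm_nonneg a]) (by linarith [norm_nonneg a])]
    nlinarith [norm_nonneg a]
  calc ‖∑' i, Acoef a n z (i + 5)‖ ≤ ‖a‖ * q ^ 5 * (1 - q)⁻¹ :=
        tsum_of_norm_bounded ((hasSum_geometric_of_lt_one hq0 (by linarith)).mul_left _) fun i =>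
          (norm_Acoef_le hn2 hz (i + 5)).trans_eq (by ring)
    _ = ‖a‖ * q ^ 4 * (q / (1 - q)) := by ring
    _ ≤ ‖a‖ * (2 * ‖a‖ / n) ^ 4 * 1 := by
      refine mul_le_mul (by gcongr) ?_ (div_nonneg hq0 (by linarith)) (by positivity)
      rw [div_le_one (by linarith)]
      linarith
    _ = 16 * ‖a‖ ^ 5 / (n : ℝ) ^ 4 := by ring

end Acoef

def siteDen (n : ℕ) (z c : ℂ) : ℂ := (n : ℂ) ^ 2 - ((n : ℂ) + c) ^ 2 + z

section Explicit

variable {V : ℤ → ℂ} {a : ℂ} {n : ℕ} {z : ℂ} {b e : ℤ}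

lemma Sterm_one (j : Fin 1 → Avoid n) :
    Sterm V n z b e 1 j = V (j 0 - b) * V (e - j 0) / ((n : ℂ) ^ 2 - ((j 0 : ℤ) : ℂ) ^ 2 + z) := by
  simp [Sterm, extWalk, Finset.prod_range_succ]

lemma Sterm_three (j : Fin 3 → Avoid n) :
    Sterm V n z b e 3 j = V (j 0 - b) * V (j 1 - j 0) * V (j 2 - j 1) * V (e - j 2) /
      (((n : ℂ) ^ 2 - ((j 0 : ℤ) : ℂ) ^ 2 + z) * ((n : ℂ) ^ 2 - ((j 1 : ℤ) : ℂ) ^ 2 + z) *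
        ((n : ℂ) ^ 2 - ((j 2 : ℤ) : ℂ) ^ 2 + z)) := by
  simp [Sterm, extWalk, Finset.prod_range_succ, Fin.prod_univ_three]

lemma loop_one_cases {j : Fin 1 → Avoid n} (h : Sterm (mathieuV a) n z n n 1 j ≠ 0) :
    (j 0 : ℤ) = n + 2 ∨ (j 0 : ℤ) = n - 2 := by
  have h0 := step_eq_two_or_eq_neg_two h (i := 0) (by norm_num)
  have h1 := step_eq_two_or_eq_neg_two h (i := 1) le_rfl
  simp [extWalk] at h0 h1
  omega

lemma loop_three_cases (hn : 3 ≤ n) {j : Fin 3 → Avoid n}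
    (h : Sterm (mathieuV a) n z n n 3 j ≠ 0) :
    ((j 0 : ℤ) = n + 2 ∧ (j 1 : ℤ) = n + 4 ∧ (j 2 : ℤ) = n + 2) ∨
      ((j 0 : ℤ) = n - 2 ∧ (j 1 : ℤ) = n - 4 ∧ (j 2 : ℤ) = n - 2) := by
  have h0 := step_eq_two_or_eq_neg_two h (i := 0) (by norm_num)
  have h1 := step_eq_two_or_eq_neg_two h (i := 1) (by norm_num)
  have h2 := step_eq_two_or_eq_neg_two h (i := 2) (by norm_num)
  have h3 := step_eq_two_or_eq_neg_two h (i := 3) le_rfl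
  simp [extWalk] at h0 h1 h2 h3
  have := (j 1).2
  omega

lemma Acoef_one (hn : 2 ≤ n) :
    Acoef a n z 1 = a ^ 2 / siteDen n z 2 + a ^ 2 / siteDen n z (-2) := by
  classical
  let up : Fin 1 → Avoid n := fun _ => ⟨n + 2, by omega⟩
  let down : Fin 1 → Avoid n := fun _ => ⟨n - 2, by omega⟩
  have hne : up ≠ down := fun h => by
    have := congrArg (fun t => (t 0 : ℤ)) h
    simp [up, down] at this
    omega
  have hsupp : ∀ j ∉ ({up, down} : Finset _), Sterm (mathieuV a) n z n n 1 j = 0 := by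
    intro j hj
    by_contra h
    refine hj ?_
    simp only [Finset.mem_insert, Finset.mem_singleton]
    rcases loop_one_cases h with h0 | h0
    · exact .inl <| funext fun s => Subtype.ext (by rw [Fin.fin_one_eq_zero s]; exact h0)
    · exact .inr <| funext fun s => Subtype.ext (by rw [Fin.fin_one_eq_zero s]; exact h0)
  rw [Acoef, tsum_eq_sum hsupp, Finset.sum_pair hne, Sterm_one, Sterm_one]
  simp [up, down, mathieuV, siteDen]
  ring

lemma Acoef_three (hn : 3 ≤ n) :
    Acoef a n z 3 = a ^ 4 / (siteDen n z 2 ^ 2 * siteDen n z 4) +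
      a ^ 4 / (siteDen n z (-2) ^ 2 * siteDen n z (-4)) := by
  classical
  let up : Fin 3 → Avoid n := ![⟨n + 2, by omega⟩, ⟨n + 4, by omega⟩, ⟨n + 2, by omega⟩]
  let down : Fin 3 → Avoid n := ![⟨n - 2, by omega⟩, ⟨n - 4, by omega⟩, ⟨n - 2, by omega⟩]
  have hne : up ≠ down := fun h => by
    have := congrArg (fun t => (t 0 : ℤ)) h
    simp [up, down] at this
    omega
  have hsupp : ∀ j ∉ ({up, down} : Finset _), Sterm (mathieuV a) n z n n 3 j = 0 := by
    intro j hj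
    by_contra h
    refine hj ?_
    simp only [Finset.mem_insert, Finset.mem_singleton]
    rcases loop_three_cases hn h with ⟨h0, h1, h2⟩ | ⟨h0, h1, h2⟩
    · exact .inl <| funext fun s => Subtype.ext (by fin_cases s <;> assumption)
    · exact .inr <| funext fun s => Subtype.ext (by fin_cases s <;> assumption)
  rw [Acoef, tsum_eq_sum hsupp, Finset.sum_pair hne, Sterm_three, Sterm_three]
  simp [up, down, mathieuV, siteDen]
  ring

lemma Acoef_one_sub_eq_div (hn : 2 ≤ n) (hup : siteDen n z 2 ≠ 0) (hdown : siteDen n z (-2) ≠ 0) :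
    Acoef a n z 1 - a ^ 2 / (2 * (n : ℂ) ^ 2) = a ^ 2 * (4 * (n : ℂ) ^ 2 * z - (z - 4) ^ 2) /
      (2 * (n : ℂ) ^ 2 * (siteDen n z 2 * siteDen n z (-2))) := by
  have hn0 : (n : ℂ) ≠ 0 := by exact_mod_cast (by omega : n ≠ 0)
  rw [Acoef_one hn]
  field_simp
  simp only [siteDen]
  ring

/-- The leading terms `∓ a⁴ / (128 n³)` of the two loops cancel. -/
lemma Acoef_three_eq_div (hn : 3 ≤ n) (hup : siteDen n z 2 ^ 2 * siteDen n z 4 ≠ 0)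
    (hdown : siteDen n z (-2) ^ 2 * siteDen n z (-4) ≠ 0) :
    Acoef a n z 3 = a ^ 4 * (2 * ((z - 4) ^ 2 * (z - 16) + 16 * (n : ℂ) ^ 2 * (5 * z - 32))) /
      (siteDen n z 2 ^ 2 * siteDen n z 4 * (siteDen n z (-2) ^ 2 * siteDen n z (-4))) := by
  rw [Acoef_three hn, div_add_div _ _ hup hdown]
  congr 1
  simp only [siteDen]
  ring

end Explicit

section Estimates

variable {a : ℂ} {n : ℕ} {z : ℂ} {M : ℝ}

lemma three_mul_le_norm_siteDen (hn : 5 ≤ n) (hz : ‖z‖ ≤ 1) {c : ℝ} (hc₂ : 2 ≤ |c|)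
    (hc₄ : |c| ≤ 4) : 3 * (n : ℝ) ≤ ‖siteDen n z c‖ := by
  have hn' : (5 : ℝ) ≤ n := by exact_mod_cast hn
  have hshift : 3 * (n : ℝ) + 1 ≤ |c * (2 * n + c)| := by
    have : 2 * n - |c| ≤ |2 * (n : ℝ) + c| :=
      le_trans (b := 2 * n + c) (by linarith [neg_abs_le c]) (le_abs_self _)
    rw [abs_mul]
    nlinarith
  have hsub := norm_sub_norm_le (((c * (2 * n + c) : ℝ)) : ℂ) z
  rw [Complex.norm_real, Real.norm_eq_abs, norm_sub_rev] at hsub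
  rw [show siteDen n z c = z - ((c * (2 * n + c) : ℝ) : ℂ) by simp only [siteDen]; push_cast; ring]
  linarith

lemma norm_Acoef_one_sub_le (hn : 5 ≤ n) (hM : 0 ≤ M) (hz : ‖z‖ ≤ 1)
    (hzM : ‖z‖ ≤ M / (n : ℝ) ^ 2) :
    ‖Acoef a n z 1 - a ^ 2 / (2 * (n : ℂ) ^ 2)‖ ≤ 2 * ‖a‖ ^ 2 * (M + 1) / (n : ℝ) ^ 4 := by
  have hn' : (5 : ℝ) ≤ n := by exact_mod_cast hn
  have hup : 3 * (n : ℝ) ≤ ‖siteDen n z 2‖ := by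
    simpa using three_mul_le_norm_siteDen hn hz (c := 2) (by norm_num) (by norm_num)
  have hdown : 3 * (n : ℝ) ≤ ‖siteDen n z (-2)‖ := by
    simpa using three_mul_le_norm_siteDen hn hz (c := -2) (by norm_num) (by norm_num)
  have hnum : ‖4 * (n : ℂ) ^ 2 * z - (z - 4) ^ 2‖ ≤ 4 * M + 25 := by
    have h4z : ‖4 * (n : ℂ) ^ 2 * z‖ ≤ 4 * M := by
      rw [norm_mul, norm_mul, norm_pow, Complex.norm_natCast, Complex.norm_ofNat]
      calc 4 * (n : ℝ) ^ 2 * ‖z‖ ≤ 4 * n ^ 2 * (M / n ^ 2) := by gcongr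
        _ = 4 * M := by field_simp
    have hz4 : ‖(z - 4) ^ 2‖ ≤ 25 := by
      rw [norm_pow, show (25 : ℝ) = 5 ^ 2 by norm_num]
      gcongr
      exact (norm_sub_le z 4).trans (by norm_num; linarith)
    exact (norm_sub_le _ _).trans (by linarith)
  rw [Acoef_one_sub_eq_div (by omega) (norm_ne_zero_iff.1 (by linarith))
    (norm_ne_zero_iff.1 (by linarith))]
  calc _ = ‖a‖ ^ 2 * ‖4 * (n : ℂ) ^ 2 * z - (z - 4) ^ 2‖ /
        (2 * (n : ℝ) ^ 2 * (‖siteDen n z 2‖ * ‖siteDen n z (-2)‖)) := by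
        simp only [norm_div, norm_mul, norm_pow, Complex.norm_natCast, Complex.norm_ofNat]
    _ ≤ ‖a‖ ^ 2 * (4 * M + 25) / (2 * (n : ℝ) ^ 2 * (3 * n * (3 * n))) := by
        gcongr
    _ = ‖a‖ ^ 2 * ((4 * M + 25) / 18) / (n : ℝ) ^ 4 := by ring
    _ ≤ ‖a‖ ^ 2 * (2 * (M + 1)) / (n : ℝ) ^ 4 := by gcongr; linarith
    _ = 2 * ‖a‖ ^ 2 * (M + 1) / (n : ℝ) ^ 4 := by ring

lemma norm_loop_three_numerator_le (hn : 5 ≤ n) (hM : 0 ≤ M) (hz : ‖z‖ ≤ 1)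
    (hzM : ‖z‖ ≤ M / (n : ℝ) ^ 2) :
    ‖2 * ((z - 4) ^ 2 * (z - 16) + 16 * (n : ℂ) ^ 2 * (5 * z - 32))‖ ≤
      2000 * (M + 1) * (n : ℝ) ^ 2 := by
  have hn' : (5 : ℝ) ≤ n := by exact_mod_cast hn
  have hz4 : ‖z - 4‖ ≤ 5 := (norm_sub_le z 4).trans (by norm_num; linarith)
  have hz16 : ‖z - 16‖ ≤ 17 := (norm_sub_le z 16).trans (by norm_num; linarith)
  have hz32 : (n : ℝ) ^ 2 * ‖5 * z - 32‖ ≤ 5 * M + 32 * n ^ 2 := by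
    calc (n : ℝ) ^ 2 * ‖5 * z - 32‖ ≤ n ^ 2 * (5 * (M / n ^ 2) + 32) := by
          gcongr
          exact (norm_sub_le _ _).trans (by rw [norm_mul]; norm_num; linarith)
      _ = 5 * M + 32 * n ^ 2 := by field_simp
  calc _ ≤ 2 * (‖z - 4‖ ^ 2 * ‖z - 16‖ + 16 * ((n : ℝ) ^ 2 * ‖5 * z - 32‖)) := by
        simp only [norm_mul, Complex.norm_ofNat]
        gcongr
        refine (norm_add_le _ _).trans_eq ?_
        simp only [norm_mul, norm_pow, Complex.norm_natCast, Complex.norm_ofNat]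
        ring
    _ ≤ 2 * (5 ^ 2 * 17 + 16 * (5 * M + 32 * n ^ 2)) := by gcongr
    _ ≤ 2000 * (M + 1) * (n : ℝ) ^ 2 := by
        nlinarith [mul_nonneg hM (by nlinarith : (0 : ℝ) ≤ (n : ℝ) ^ 2 - 1)]

lemma norm_Acoef_three_le (hn : 5 ≤ n) (hM : 0 ≤ M) (hz : ‖z‖ ≤ 1)
    (hzM : ‖z‖ ≤ M / (n : ℝ) ^ 2) :
    ‖Acoef a n z 3‖ ≤ 3 * ‖a‖ ^ 4 * (M + 1) / (n : ℝ) ^ 4 := by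
  have hn' : (5 : ℝ) ≤ n := by exact_mod_cast hn
  have hden (c : ℝ) (hc₂ : 2 ≤ |c|) (hc₄ : |c| ≤ 4) := three_mul_le_norm_siteDen hn hz hc₂ hc₄
  have h₁ : 3 * (n : ℝ) ≤ ‖siteDen n z 2‖ := by simpa using hden 2 (by norm_num) (by norm_num)
  have h₂ : 3 * (n : ℝ) ≤ ‖siteDen n z 4‖ := by simpa using hden 4 (by norm_num) (by norm_num)
  have h₃ : 3 * (n : ℝ) ≤ ‖siteDen n z (-2)‖ := by simpa using hden (-2) (by norm_num) (by norm_num)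
  have h₄ : 3 * (n : ℝ) ≤ ‖siteDen n z (-4)‖ := by simpa using hden (-4) (by norm_num) (by norm_num)
  have hne {c : ℂ} (h : 3 * (n : ℝ) ≤ ‖siteDen n z c‖) : siteDen n z c ≠ 0 :=
    norm_ne_zero_iff.1 (by linarith)
  rw [Acoef_three_eq_div (by omega) (mul_ne_zero (pow_ne_zero 2 (hne h₁)) (hne h₂))
    (mul_ne_zero (pow_ne_zero 2 (hne h₃)) (hne h₄))]
  calc _ = ‖a‖ ^ 4 * ‖2 * ((z - 4) ^ 2 * (z - 16) + 16 * (n : ℂ) ^ 2 * (5 * z - 32))‖ /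
        (‖siteDen n z 2‖ ^ 2 * ‖siteDen n z 4‖ *
          (‖siteDen n z (-2)‖ ^ 2 * ‖siteDen n z (-4)‖)) := by
        simp only [norm_div, norm_mul, norm_pow]
    _ ≤ ‖a‖ ^ 4 * (2000 * (M + 1) * (n : ℝ) ^ 2) /
          ((3 * n) ^ 2 * (3 * n) * ((3 * n) ^ 2 * (3 * n))) := by
        gcongr
        exact norm_loop_three_numerator_le hn hM hz hzM
    _ = 2000 / 729 * ‖a‖ ^ 4 * (M + 1) / (n : ℝ) ^ 4 := by
        field_simp
        ring
    _ ≤ 3 * ‖a‖ ^ 4 * (M + 1) / (n : ℝ) ^ 4 := by gcongr; norm_num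

end Estimates

lemma norm_alphaC_sub_le {a : ℂ} {n : ℕ} {z : ℂ} {M : ℝ} (hM : 0 ≤ M)
    (hn : M + 2 * ‖a‖ + 5 ≤ n) (hzM : ‖z‖ ≤ M / (n : ℝ) ^ 2) :
    ‖alphaC a n z - a ^ 2 / (2 * (n : ℂ) ^ 2)‖ ≤
      ((2 * ‖a‖ ^ 2 + 3 * ‖a‖ ^ 4) * (M + 1) + 16 * ‖a‖ ^ 5) / (n : ℝ) ^ 4 := by
  have hn5 : 5 ≤ n := by exact_mod_cast (by linarith [norm_nonneg a] : (5 : ℝ) ≤ n)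
  have hz : ‖z‖ ≤ 1 := hzM.trans <| (div_le_one (pow_pos (by linarith [norm_nonneg a]) 2)).2
    (by nlinarith [norm_nonneg a])
  have hna : 2 * ‖a‖ + 2 ≤ (n : ℝ) := by linarith
  rw [alphaC_eq_Acoef_one_add_Acoef_three_add hna hz,
    show ∀ x y w v : ℂ, x + y + w - v = (x - v) + y + w by intros; ring]
  calc _ ≤ ‖Acoef a n z 1 - a ^ 2 / (2 * (n : ℂ) ^ 2)‖ + ‖Acoef a n z 3‖ +
        ‖∑' i, Acoef a n z (i + 5)‖ := norm_add₃_le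
    _ ≤ 2 * ‖a‖ ^ 2 * (M + 1) / (n : ℝ) ^ 4 + 3 * ‖a‖ ^ 4 * (M + 1) / (n : ℝ) ^ 4 +
        16 * ‖a‖ ^ 5 / (n : ℝ) ^ 4 := by
      gcongr
      exacts [norm_Acoef_one_sub_le hn5 hM hz hzM, norm_Acoef_three_le hn5 hM hz hzM,
        norm_tsum_Acoef_add_five_le hna hz]
    _ = _ := by ring

theorem mathieu_stmt_11_general (a : ℂ) (M : ℝ) :
    ∃ C > (0 : ℝ), ∃ N : ℕ, ∀ n ≥ N, ∀ z : ℂ, ‖z‖ ≤ M / (n : ℝ) ^ 2 →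
      ‖alphaC a n z - a ^ 2 / (2 * (n : ℂ) ^ 2)‖ ≤ C / (n : ℝ) ^ 4 := by
  refine ⟨(2 * ‖a‖ ^ 2 + 3 * ‖a‖ ^ 4) * (|M| + 1) + 16 * ‖a‖ ^ 5 + 1, by positivity,
    ⌈|M| + 2 * ‖a‖⌉₊ + 5, fun n hn z hz => ?_⟩
  have hn' : |M| + 2 * ‖a‖ + 5 ≤ n := by
    have hceil := Nat.le_ceil (|M| + 2 * ‖a‖)
    have : ((⌈|M| + 2 * ‖a‖⌉₊ + 5 : ℕ) : ℝ) ≤ n := by exact_mod_cast hn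
    push_cast at this
    linarith
  refine (norm_alphaC_sub_le (abs_nonneg M) hn' (hz.trans ?_)).trans ?_
  · gcongr
    exact le_abs_self M
  · gcongr ?_ / _
    linarith

/-- For every `M > 0` there are `C > 0` and `N` such that for all `n ≥ N` and all `z` with
`|z| ≤ M/n²` one has `|α_n(z) - a²/(2n²)| ≤ C/n⁴`. -/
theorem mathieu_stmt_11 (a : ℂ) (ha : a ≠ 0) (M : ℝ) (hM : 0 < M) :
    ∃ C > (0 : ℝ), ∃ N : ℕ, ∀ n ≥ N, ∀ z : ℂ, ‖z‖ ≤ M / (n : ℝ) ^ 2 →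
      ‖alphaC a n z - a ^ 2 / (2 * (n : ℂ) ^ 2)‖ ≤ C / (n : ℝ) ^ 4 :=
  mathieu_stmt_11_general a M
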